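/- There is no weighted subset (Y,w) of {0,1}^{10}, with w : Y → ℝ_{>0}, that is a relative 2-design in H(10,2) with respect to u₀ = (0,…,0) supported on the shells X_2 and X_5 with |Y ∩ X_2| = 5 and |Y ∩ X_5| = 6. (This is the parameter set 10(1) of the paper's table; note |Y| = 11 = n+1, so such a design would be tight.) -/

import Mathlib

open Finset

/-- The vertex set of the binary Hamming scheme `H(n,2)`. -/
abbrev X (n : ℕ) := Fin n → Bool

/-- The fixed base point `u₀ = (0,…,0)`. -/
def u₀ (n : ℕ) : X n := fun _ => false

/-- The `r`-th shell `X_r = {x : d(u₀,x) = r}`. -/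
def shell (n r : ℕ) : Finset (X n) :=
  Finset.univ.filter (fun x => hammingDist (u₀ n) x = r)

/-- The Krawtchouk polynomial `Q_j(u)` for `H(n,2)`. -/
noncomputable def Q (n j u : ℕ) : ℝ :=
  ∑ i ∈ Finset.range (j + 1),
    (-1 : ℝ) ^ i * ((n - u).choose (j - i) : ℝ) * (u.choose i : ℝ)

/-- The total weight `W_r = Σ_{y ∈ Y ∩ X_r} w(y)`. -/
noncomputable def Wt (n : ℕ) (Y : Finset (X n)) (w : X n → ℝ) (r : ℕ) : ℝ :=
  ∑ y ∈ Y.filter (fun y => hammingDist (u₀ n) y = r), w y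

/-- `(Y,w)` is a relative `t`-design of `H(n,2)` with respect to `u₀ = (0,…,0)`,
supported on the shells `X_r`, `r ∈ R`: `Y` lies in the union of these shells,
meets each of them, has positive weights, and the design identity holds for all
Krawtchouk functions of degree `j ≤ t`. -/
def IsRelativeDesign (n t : ℕ) (Y : Finset (X n)) (w : X n → ℝ) (R : Finset ℕ) : Prop :=
  (∀ y ∈ Y, hammingDist (u₀ n) y ∈ R) ∧
  (∀ r ∈ R, ∃ y ∈ Y, hammingDist (u₀ n) y = r) ∧
  (∀ y ∈ Y, 0 < w y) ∧
  (∀ j ≤ t, ∀ u : X n,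
    ∑ r ∈ R, Wt n Y w r / (n.choose r : ℝ) * ∑ x ∈ shell n r, Q n j (hammingDist u x)
      = ∑ y ∈ Y, w y * Q n j (hammingDist u y))

noncomputable def ι (b : Bool) : ℝ := if b then 1 else 0

lemma ι_nonneg (b : Bool) : 0 ≤ ι b := by unfold ι; split <;> norm_num

lemma ι_le_one (b : Bool) : ι b ≤ 1 := by unfold ι; split <;> norm_num

lemma ι_mul_self (b : Bool) : ι b * ι b = ι b := by unfold ι; cases b <;> simp

lemma hammingDist_perm (σ : Equiv.Perm (Fin 10)) (x y : X 10) :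
    hammingDist (x ∘ σ) (y ∘ σ) = hammingDist x y := by
  unfold hammingDist
  apply Finset.card_bij (fun i _ => σ i)
  · intro a ha; simp only [mem_filter, mem_univ, true_and] at ha ⊢; exact ha
  · intro a _ b _ h; exact σ.injective h
  · intro b hb
    refine ⟨σ.symm b, ?_, by simp⟩
    simp only [mem_filter, mem_univ, true_and, Function.comp_apply] at hb ⊢
    simpa using hb

lemma u₀_comp (σ : Equiv.Perm (Fin 10)) : (u₀ 10) ∘ σ = u₀ 10 := rfl

lemma shell_perm_sum (σ : Equiv.Perm (Fin 10)) (u : X 10) (r j : ℕ) :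
    ∑ x ∈ shell 10 r, Q 10 j (hammingDist (u ∘ σ) x)
      = ∑ x ∈ shell 10 r, Q 10 j (hammingDist u x) := by
  apply Finset.sum_nbij' (fun x => x ∘ ⇑σ⁻¹) (fun x => x ∘ ⇑σ)
  · intro x hx
    simp only [shell, mem_filter, mem_univ, true_and] at hx ⊢
    rw [← u₀_comp σ⁻¹]; rw [hammingDist_perm σ⁻¹ (u₀ 10) x] ; exact hx
  · intro x hx
    simp only [shell, mem_filter, mem_univ, true_and] at hx ⊢
    rw [← u₀_comp σ]; rw [hammingDist_perm σ (u₀ 10) x]; exact hx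
  · intro x _; funext i; simp
  · intro x _; funext i; simp
  · intro x _
    have : x = (x ∘ ⇑σ⁻¹) ∘ ⇑σ := by funext i; simp
    conv_lhs => rw [this]
    rw [hammingDist_perm σ u (x ∘ ⇑σ⁻¹)]

def u1 (k : Fin 10) : X 10 := fun i => decide (i = k)
def u2 (k l : Fin 10) : X 10 := fun i => decide (i = k) || decide (i = l)

lemma hd_sum (x y : X 10) :
    hammingDist x y = ∑ i : Fin 10, if x i ≠ y i then 1 else 0 := by
  unfold hammingDist
  have := (Finset.natCast_card_filter (R := ℕ) (fun i => x i ≠ y i) univ).symm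
  simpa using this.symm

lemma dist_u1 (k : Fin 10) (y : X 10) :
    hammingDist (u1 k) y + (if y k then 1 else 0)
      = hammingDist (u₀ 10) y + (if y k then 0 else 1) := by
  rw [hd_sum, hd_sum]
  rw [← Finset.add_sum_erase _ _ (mem_univ k), ← Finset.add_sum_erase _ _ (mem_univ k)]
  have he : ∑ i ∈ univ.erase k, (if u1 k i ≠ y i then 1 else 0)
      = ∑ i ∈ univ.erase k, (if u₀ 10 i ≠ y i then 1 else 0) := by
    apply Finset.sum_congr rfl
    intro i hi
    have : u1 k i = false := by
      simp only [u1, decide_eq_false_iff_not]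
      exact (Finset.mem_erase.mp hi).1
    rw [this]; rfl
  rw [he]
  have h1 : u1 k k = true := by simp [u1]
  rw [h1]
  cases hyk : y k <;> simp [u₀] <;> omega

lemma dist_u2 (k l : Fin 10) (hkl : k ≠ l) (y : X 10) :
    hammingDist (u2 k l) y + (if y k then 1 else 0) + (if y l then 1 else 0)
      = hammingDist (u₀ 10) y + (if y k then 0 else 1) + (if y l then 0 else 1) := by
  rw [hd_sum, hd_sum]
  have hl : l ∈ univ.erase k := by simp [Ne.symm hkl]
  rw [← Finset.add_sum_erase _ _ (mem_univ k), ← Finset.add_sum_erase _ _ (mem_univ k),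
    ← Finset.add_sum_erase _ _ hl, ← Finset.add_sum_erase _ _ hl]
  have he : ∑ i ∈ (univ.erase k).erase l, (if u2 k l i ≠ y i then 1 else 0)
      = ∑ i ∈ (univ.erase k).erase l, (if u₀ 10 i ≠ y i then 1 else 0) := by
    apply Finset.sum_congr rfl
    intro i hi
    simp only [mem_erase] at hi
    have : u2 k l i = false := by
      simp only [u2, Bool.or_eq_false_iff, decide_eq_false_iff_not]
      exact ⟨hi.2.1, hi.1⟩
    rw [this]; rfl
  rw [he]
  have h1 : u2 k l k = true := by simp [u2]
  have h2 : u2 k l l = true := by simp [u2]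
  rw [h1, h2]
  cases hyk : y k <;> cases hyl : y l <;> simp [u₀] <;> omega

lemma Qval1 (d : ℕ) (hd : d ≤ 10) : Q 10 1 d = 10 - 2 * (d : ℝ) := by
  unfold Q
  rw [Finset.sum_range_succ, Finset.sum_range_succ]
  simp [Nat.choose_one_right]
  push_cast [Nat.cast_sub hd]
  ring

lemma Qval2_0 : Q 10 2 0 = 45 := by unfold Q; norm_num [Finset.sum_range_succ, Nat.choose_two_right]
lemma Qval2_2 : Q 10 2 2 = 13 := by unfold Q; norm_num [Finset.sum_range_succ, Nat.choose_two_right]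
lemma Qval2_3 : Q 10 2 3 = 3 := by unfold Q; norm_num [Finset.sum_range_succ, Nat.choose_two_right]
lemma Qval2_4 : Q 10 2 4 = -3 := by unfold Q; norm_num [Finset.sum_range_succ, Nat.choose_two_right]
lemma Qval2_5 : Q 10 2 5 = -5 := by unfold Q; norm_num [Finset.sum_range_succ, Nat.choose_two_right]
lemma Qval2_7 : Q 10 2 7 = 3 := by unfold Q; norm_num [Finset.sum_range_succ, Nat.choose_two_right]

-- per-y Q evaluation lemmas, built on h2 defs
lemma wt_eq (y : X 10) :
    hammingDist (u₀ 10) y = #(univ.filter fun i => y i = true) := by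
  unfold hammingDist
  congr 1
  apply Finset.filter_congr
  intro i _
  simp [u₀]

lemma sum_ι (s : Finset (Fin 10)) (y : X 10) :
    ∑ k ∈ s, ι (y k) = (#(s.filter fun k => y k = true) : ℝ) := by
  unfold ι
  rw [Finset.sum_boole]

lemma sum_ι_univ (y : X 10) :
    ∑ k : Fin 10, ι (y k) = (hammingDist (u₀ 10) y : ℝ) := by
  rw [sum_ι, wt_eq]

lemma sum_ι2 (y y' : X 10) :
    ∑ k : Fin 10, ι (y k) * ι (y' k)
      = (#(univ.filter fun k => y k = true ∧ y' k = true) : ℝ) := by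
  have : ∀ k, ι (y k) * ι (y' k) = if (y k = true ∧ y' k = true) then (1:ℝ) else 0 := by
    intro k; unfold ι; cases y k <;> cases y' k <;> simp
  simp_rw [this]
  rw [Finset.sum_boole]

lemma Qy1_2 (k : Fin 10) (y : X 10) (h2 : hammingDist (u₀ 10) y = 2) :
    Q 10 1 (hammingDist (u1 k) y) = 4 + 4 * ι (y k) := by
  have hd := dist_u1 k y
  rw [h2] at hd
  cases hyk : y k <;> rw [hyk] at hd <;> norm_num at hd
  · have : hammingDist (u1 k) y = 3 := by omega
    rw [this, Qval1 3 (by norm_num)]; norm_num [ι]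
  · have : hammingDist (u1 k) y = 1 := by omega
    rw [this, Qval1 1 (by norm_num)]; norm_num [ι]

lemma Qy1_5 (k : Fin 10) (y : X 10) (h5 : hammingDist (u₀ 10) y = 5) :
    Q 10 1 (hammingDist (u1 k) y) = -2 + 4 * ι (y k) := by
  have hd := dist_u1 k y
  rw [h5] at hd
  cases hyk : y k <;> rw [hyk] at hd <;> norm_num at hd
  · have : hammingDist (u1 k) y = 6 := by omega
    rw [this, Qval1 6 (by norm_num)]; norm_num [ι]
  · have : hammingDist (u1 k) y = 4 := by omega
    rw [this, Qval1 4 (by norm_num)]; norm_num [ι]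

lemma Qy2_2 (k l : Fin 10) (hkl : k ≠ l) (y : X 10) (h2 : hammingDist (u₀ 10) y = 2) :
    Q 10 2 (hammingDist (u2 k l) y)
      = -3 + 16 * (ι (y k) + ι (y l)) + 16 * (ι (y k) * ι (y l)) := by
  have hd := dist_u2 k l hkl y
  rw [h2] at hd
  cases hyk : y k <;> cases hyl : y l <;> rw [hyk, hyl] at hd <;>
    norm_num at hd
  · have : hammingDist (u2 k l) y = 4 := by omega
    rw [this, Qval2_4]; norm_num [ι]
  · have : hammingDist (u2 k l) y = 2 := by omega
    rw [this, Qval2_2]; norm_num [ι]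
  · have : hammingDist (u2 k l) y = 2 := by omega
    rw [this, Qval2_2]; norm_num [ι]
  · have : hammingDist (u2 k l) y = 0 := by omega
    rw [this, Qval2_0]; norm_num [ι]

lemma Qy2_5 (k l : Fin 10) (hkl : k ≠ l) (y : X 10) (h5 : hammingDist (u₀ 10) y = 5) :
    Q 10 2 (hammingDist (u2 k l) y)
      = 3 - 8 * (ι (y k) + ι (y l)) + 16 * (ι (y k) * ι (y l)) := by
  have hd := dist_u2 k l hkl y
  rw [h5] at hd
  cases hyk : y k <;> cases hyl : y l <;> rw [hyk, hyl] at hd <;>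
    norm_num at hd
  · have : hammingDist (u2 k l) y = 7 := by omega
    rw [this, Qval2_7]; norm_num [ι]
  · have : hammingDist (u2 k l) y = 5 := by omega
    rw [this, Qval2_5]; norm_num [ι]
  · have : hammingDist (u2 k l) y = 5 := by omega
    rw [this, Qval2_5]; norm_num [ι]
  · have : hammingDist (u2 k l) y = 3 := by omega
    rw [this, Qval2_3]; norm_num [ι]

lemma u1_comp (σ : Equiv.Perm (Fin 10)) (k : Fin 10) : (u1 k) ∘ σ = u1 (σ⁻¹ k) := by
  funext i
  simp only [u1, Function.comp_apply]
  apply decide_eq_decide.mpr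
  constructor
  · intro h; rw [← h]; simp
  · intro h; rw [h]; simp

lemma u2_comp (σ : Equiv.Perm (Fin 10)) (k l : Fin 10) :
    (u2 k l) ∘ σ = u2 (σ⁻¹ k) (σ⁻¹ l) := by
  funext i
  simp only [u2, Function.comp_apply]
  congr 1 <;> apply decide_eq_decide.mpr <;> constructor
  · intro h; rw [← h]; simp
  · intro h; rw [h]; simp
  · intro h; rw [← h]; simp
  · intro h; rw [h]; simp

lemma exists_perm_pair (k l : Fin 10) (hkl : k ≠ l) :
    ∃ σ : Equiv.Perm (Fin 10), σ⁻¹ 0 = k ∧ σ⁻¹ 1 = l := by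
  classical
  set τ1 := Equiv.swap (0 : Fin 10) k with hτ1
  have hne : τ1.symm l ≠ (0 : Fin 10) := by
    intro h
    have : l = τ1 0 := by
      have := congrArg τ1 h
      simpa using this
    rw [hτ1] at this
    simp [Equiv.swap_apply_left] at this
    exact hkl this.symm
  set τ2 := Equiv.swap (1 : Fin 10) (τ1.symm l) with hτ2
  refine ⟨(τ1 * τ2)⁻¹, ?_, ?_⟩
  · simp only [inv_inv, Equiv.Perm.mul_apply]
    have h20 : τ2 0 = 0 := by
      rw [hτ2, Equiv.swap_apply_of_ne_of_ne]
      · decide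
      · exact fun h => hne h.symm
    rw [h20, hτ1, Equiv.swap_apply_left]
  · simp only [inv_inv, Equiv.Perm.mul_apply]
    have h21 : τ2 1 = τ1.symm l := by rw [hτ2, Equiv.swap_apply_left]
    rw [h21]
    simp

noncomputable def sA (Z : Finset (X 10)) (w : X 10 → ℝ) (k : Fin 10) : ℝ := ∑ y ∈ Z, w y * ι (y k)
noncomputable def sE (Z : Finset (X 10)) (w : X 10 → ℝ) (k l : Fin 10) : ℝ :=
  ∑ y ∈ Z, w y * ι (y k) * ι (y l)
def Mc (y y' : X 10) : ℕ := #(univ.filter fun k => y k = true ∧ y' k = true)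

lemma G1 (Z : Finset (X 10)) (w : X 10 → ℝ) :
    ∑ k : Fin 10, sA Z w k = ∑ y ∈ Z, w y * (hammingDist (u₀ 10) y : ℝ) := by
  unfold sA
  rw [Finset.sum_comm]
  apply Finset.sum_congr rfl
  intro y _
  rw [← Finset.mul_sum, sum_ι_univ]

lemma G2 (Z : Finset (X 10)) (w : X 10 → ℝ) (k : Fin 10) :
    ∑ l : Fin 10, sE Z w k l
      = ∑ y ∈ Z, w y * ι (y k) * (hammingDist (u₀ 10) y : ℝ) := by
  unfold sE
  rw [Finset.sum_comm]
  apply Finset.sum_congr rfl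
  intro y _
  rw [← Finset.mul_sum, sum_ι_univ]

lemma G3 (Z : Finset (X 10)) (w : X 10 → ℝ) (k : Fin 10) : sE Z w k k = sA Z w k := by
  unfold sE sA
  apply Finset.sum_congr rfl
  intro y _
  rw [mul_assoc, ι_mul_self]

lemma G4 (Z : Finset (X 10)) (w : X 10 → ℝ) :
    ∑ k : Fin 10, (sA Z w k) ^ 2
      = ∑ y ∈ Z, ∑ y' ∈ Z, w y * w y' * (Mc y y' : ℝ) := by
  unfold sA
  have h : ∀ k : Fin 10, (∑ y ∈ Z, w y * ι (y k)) ^ 2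
      = ∑ y ∈ Z, ∑ y' ∈ Z, (w y * w y') * (ι (y k) * ι (y' k)) := by
    intro k
    rw [sq, Finset.sum_mul_sum]
    apply Finset.sum_congr rfl; intro y _
    apply Finset.sum_congr rfl; intro y' _
    ring
  simp_rw [h]
  rw [Finset.sum_comm]
  apply Finset.sum_congr rfl; intro y _
  rw [Finset.sum_comm]
  apply Finset.sum_congr rfl; intro y' _
  rw [← Finset.mul_sum, sum_ι2]
  rfl

lemma G5 (Z : Finset (X 10)) (w : X 10 → ℝ) :
    ∑ k : Fin 10, ∑ l : Fin 10, (sE Z w k l) ^ 2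
      = ∑ y ∈ Z, ∑ y' ∈ Z, w y * w y' * (Mc y y' : ℝ) ^ 2 := by
  unfold sE
  have h : ∀ k l : Fin 10, (∑ y ∈ Z, w y * ι (y k) * ι (y l)) ^ 2
      = ∑ y ∈ Z, ∑ y' ∈ Z, ((w y * w y') * (ι (y k) * ι (y' k))) * (ι (y l) * ι (y' l)) := by
    intro k l
    rw [sq, Finset.sum_mul_sum]
    apply Finset.sum_congr rfl; intro y _
    apply Finset.sum_congr rfl; intro y' _
    ring
  simp_rw [h]
  have h2 : ∀ k : Fin 10,
      ∑ l : Fin 10, ∑ y ∈ Z, ∑ y' ∈ Z,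
          ((w y * w y') * (ι (y k) * ι (y' k))) * (ι (y l) * ι (y' l))
      = ∑ y ∈ Z, ∑ y' ∈ Z, ((w y * w y') * (ι (y k) * ι (y' k))) * (Mc y y' : ℝ) := by
    intro k
    rw [Finset.sum_comm]
    apply Finset.sum_congr rfl; intro y _
    rw [Finset.sum_comm]
    apply Finset.sum_congr rfl; intro y' _
    rw [← Finset.mul_sum, sum_ι2]
    rfl
  simp_rw [h2]
  rw [Finset.sum_comm]
  apply Finset.sum_congr rfl; intro y _
  rw [Finset.sum_comm]
  apply Finset.sum_congr rfl; intro y' _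
  rw [← Finset.sum_mul, ← Finset.mul_sum, sum_ι2]
  have : (Mc y y' : ℝ) = (#(univ.filter fun k => y k = true ∧ y' k = true) : ℝ) := rfl
  rw [← this]
  ring

lemma Mc_self (y : X 10) : Mc y y = hammingDist (u₀ 10) y := by
  rw [wt_eq]
  unfold Mc
  congr 1
  apply Finset.filter_congr
  intro i _
  simp

lemma q_nonneg (m : ℕ) : 0 ≤ ((m:ℝ) - 2) * ((m:ℝ) - 3) := by
  rcases le_or_gt m 2 with h | h
  · have h' : (m:ℝ) ≤ 2 := by exact_mod_cast h
    nlinarith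
  · have h' : (3:ℝ) ≤ (m:ℝ) := by exact_mod_cast h
    nlinarith

lemma sum_ι2Z (Z : Finset (X 10)) (k l : Fin 10) :
    ∑ y ∈ Z, ι (y k) * ι (y l)
      = (#(Z.filter fun y => y k = true ∧ y l = true) : ℝ) := by
  have : ∀ y : X 10, ι (y k) * ι (y l) = if (y k = true ∧ y l = true) then (1:ℝ) else 0 := by
    intro y; unfold ι; cases y k <;> cases y l <;> simp
  simp_rw [this]
  rw [Finset.sum_boole]

lemma wt2_eq (y y' : X 10) (hy : hammingDist (u₀ 10) y = 2) (hy' : hammingDist (u₀ 10) y' = 2)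
    (k l : Fin 10) (hkl : k ≠ l) (h1 : y k = true) (h2 : y l = true)
    (h3 : y' k = true) (h4 : y' l = true) : y = y' := by
  have hs : ∀ z : X 10, hammingDist (u₀ 10) z = 2 → z k = true → z l = true →
      (univ.filter fun i => z i = true) = {k, l} := by
    intro z hz hk hl
    symm
    apply Finset.eq_of_subset_of_card_le
    · intro i hi
      simp only [Finset.mem_insert, Finset.mem_singleton] at hi
      rcases hi with rfl | rfl <;> simp [hk, hl]
    · rw [← wt_eq, hz, Finset.card_pair hkl]
  have e1 := hs y hy h1 h2
  have e2 := hs y' hy' h3 h4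
  funext i
  have m1 : y i = true ↔ i ∈ ({k, l} : Finset (Fin 10)) := by
    rw [← e1]; simp
  have m2 : y' i = true ↔ i ∈ ({k, l} : Finset (Fin 10)) := by
    rw [← e2]; simp
  have := m1.trans m2.symm
  cases hyi : y i <;> cases hy'i : y' i <;> rw [hyi, hy'i] at this <;> simp_all

set_option maxHeartbeats 1600000 in
theorem core (Y2 Y5 : Finset (X 10)) (w : X 10 → ℝ)
    (hY2mem : ∀ y ∈ Y2, hammingDist (u₀ 10) y = 2)
    (hY5mem : ∀ y ∈ Y5, hammingDist (u₀ 10) y = 5)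
    (hc2 : #Y2 = 5) (hc5 : #Y5 = 6)
    (hpos2 : ∀ y ∈ Y2, 0 < w y) (hpos5 : ∀ y ∈ Y5, 0 < w y)
    (E1 : ∀ k : Fin 10, sA Y2 w k + sA Y5 w k = sA Y2 w 0 + sA Y5 w 0)
    (E2 : ∀ k l : Fin 10, k ≠ l →
      16*(sA Y2 w k + sA Y2 w l) - 8*(sA Y5 w k + sA Y5 w l)
        + 16*(sE Y2 w k l + sE Y5 w k l)
      = 16*(sA Y2 w 0 + sA Y2 w 1) - 8*(sA Y5 w 0 + sA Y5 w 1)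
        + 16*(sE Y2 w 0 1 + sE Y5 w 0 1)) : False := by
  set U := ∑ y ∈ Y2, w y with hUdef
  set V := ∑ y ∈ Y5, w y with hVdef
  have hU : 0 < U := Finset.sum_pos hpos2 (Finset.card_pos.mp (by rw [hc2]; norm_num))
  have hV : 0 < V := Finset.sum_pos hpos5 (Finset.card_pos.mp (by rw [hc5]; norm_num))
  have hwnn2 : ∀ y ∈ Y2, 0 ≤ w y := fun y hy => (hpos2 y hy).le
  have hwnn5 : ∀ y ∈ Y5, 0 ≤ w y := fun y hy => (hpos5 y hy).le
  -- column sums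
  have hsumA : ∑ k : Fin 10, sA Y2 w k = 2*U := by
    rw [G1, Finset.sum_congr rfl (fun y hy => by rw [hY2mem y hy]), ← Finset.sum_mul, ← hUdef]
    push_cast; ring
  have hsumB : ∑ k : Fin 10, sA Y5 w k = 5*V := by
    rw [G1, Finset.sum_congr rfl (fun y hy => by rw [hY5mem y hy]), ← Finset.sum_mul, ← hVdef]
    push_cast; ring
  -- row sums of sE
  have hfull2 : ∀ k, ∑ l : Fin 10, sE Y2 w k l = 2 * sA Y2 w k := by
    intro k
    rw [G2]
    unfold sA
    rw [Finset.mul_sum]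
    apply Finset.sum_congr rfl
    intro y hy
    rw [hY2mem y hy]; push_cast; ring
  have hfull5 : ∀ k, ∑ l : Fin 10, sE Y5 w k l = 5 * sA Y5 w k := by
    intro k
    rw [G2]
    unfold sA
    rw [Finset.mul_sum]
    apply Finset.sum_congr rfl
    intro y hy
    rw [hY5mem y hy]; push_cast; ring
  have hrow2 : ∀ k, ∑ l ∈ univ.erase k, sE Y2 w k l = sA Y2 w k := by
    intro k
    rw [Finset.sum_erase_eq_sub (mem_univ k), hfull2 k, G3]
    ring
  have hrow5 : ∀ k, ∑ l ∈ univ.erase k, sE Y5 w k l = 4 * sA Y5 w k := by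
    intro k
    rw [Finset.sum_erase_eq_sub (mem_univ k), hfull5 k, G3]
    ring
  -- step 4 : all sA Y2 equal U/5, all sA Y5 equal V/2
  have hGfull : ∀ k : Fin 10,
      ∑ l : Fin 10, (16*(sA Y2 w k + sA Y2 w l) - 8*(sA Y5 w k + sA Y5 w l)
        + 16*(sE Y2 w k l + sE Y5 w k l))
      = 192 * sA Y2 w k + 32*U - 40*V := by
    intro k
    simp only [Finset.sum_add_distrib, Finset.sum_sub_distrib, ← Finset.mul_sum,
      Finset.sum_const, Finset.card_univ, Fintype.card_fin, nsmul_eq_mul,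
      Finset.sum_add_distrib]
    rw [hsumA, hsumB, hfull2 k, hfull5 k]
    push_cast
    ring
  have h9 : ∀ k : Fin 10, 144 * sA Y2 w k + 32*U - 40*V
      = 9 * (16*(sA Y2 w 0 + sA Y2 w 1) - 8*(sA Y5 w 0 + sA Y5 w 1)
        + 16*(sE Y2 w 0 1 + sE Y5 w 0 1)) := by
    intro k
    have hKs : ∑ l ∈ univ.erase k, (16*(sA Y2 w k + sA Y2 w l) - 8*(sA Y5 w k + sA Y5 w l)
        + 16*(sE Y2 w k l + sE Y5 w k l))
        = 9 * (16*(sA Y2 w 0 + sA Y2 w 1) - 8*(sA Y5 w 0 + sA Y5 w 1)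
        + 16*(sE Y2 w 0 1 + sE Y5 w 0 1)) := by
      rw [Finset.sum_congr rfl
        (fun l hl => E2 k l (fun h => (Finset.mem_erase.mp hl).1 h.symm))]
      rw [Finset.sum_const, Finset.card_erase_of_mem (mem_univ k), Finset.card_univ]
      simp [Fintype.card_fin]
      ring
    have hGk : (16*(sA Y2 w k + sA Y2 w k) - 8*(sA Y5 w k + sA Y5 w k)
        + 16*(sE Y2 w k k + sE Y5 w k k)) = 48 * sA Y2 w k := by
      rw [G3, G3]; ring
    have hes := Finset.sum_erase_eq_sub (s := univ) (f := fun l => (16*(sA Y2 w k + sA Y2 w l)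
        - 8*(sA Y5 w k + sA Y5 w l) + 16*(sE Y2 w k l + sE Y5 w k l))) (mem_univ k)
    beta_reduce at hes
    rw [hKs, hGfull k, hGk] at hes
    linarith
  have ha : ∀ k : Fin 10, sA Y2 w k = U/5 := by
    have heq : ∀ k : Fin 10, sA Y2 w k = sA Y2 w 0 := by
      intro k; have h1 := h9 k; have h2 := h9 0; linarith
    have hten : ∑ k : Fin 10, sA Y2 w k = 10 * sA Y2 w 0 := by
      rw [Finset.sum_congr rfl (fun k _ => heq k), Finset.sum_const, Finset.card_univ]
      simp [Fintype.card_fin]; try ring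
    intro k
    have := heq k
    linarith [hsumA, hten]
  have hb : ∀ k : Fin 10, sA Y5 w k = V/2 := by
    have heq : ∀ k : Fin 10, sA Y5 w k = sA Y5 w 0 := by
      intro k; have h1 := E1 k; have := ha k; have := ha 0; linarith
    have hten : ∑ k : Fin 10, sA Y5 w k = 10 * sA Y5 w 0 := by
      rw [Finset.sum_congr rfl (fun k _ => heq k), Finset.sum_const, Finset.card_univ]
      simp [Fintype.card_fin]; try ring
    intro k
    have := heq k
    linarith [hsumB, hten]
  -- constant pair sums
  have hT : ∀ k l : Fin 10, k ≠ l →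
      sE Y2 w k l + sE Y5 w k l = sE Y2 w 0 1 + sE Y5 w 0 1 := by
    intro k l hkl
    have := E2 k l hkl
    have h1 := ha k; have h2 := ha l; have h3 := ha 0; have h4 := ha 1
    have h5 := hb k; have h6 := hb l; have h7 := hb 0; have h8 := hb 1
    linarith
  set Tc := sE Y2 w 0 1 + sE Y5 w 0 1 with hTcdef
  have hTc90 : 90 * Tc = 2*U + 20*V := by
    have hL : ∑ k : Fin 10, ∑ l ∈ univ.erase k, (sE Y2 w k l + sE Y5 w k l)
        = 90 * Tc := by
      have hin : ∀ k : Fin 10, ∑ l ∈ univ.erase k, (sE Y2 w k l + sE Y5 w k l) = 9 * Tc := by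
        intro k
        rw [Finset.sum_congr rfl
          (fun l hl => hT k l (fun h => (Finset.mem_erase.mp hl).1 h.symm))]
        rw [Finset.sum_const, Finset.card_erase_of_mem (mem_univ k), Finset.card_univ]
        simp [Fintype.card_fin]
      rw [Finset.sum_congr rfl (fun k _ => hin k), Finset.sum_const, Finset.card_univ]
      simp [Fintype.card_fin]; try ring
    have hR : ∑ k : Fin 10, ∑ l ∈ univ.erase k, (sE Y2 w k l + sE Y5 w k l)
        = 2*U + 20*V := by
      have hin : ∀ k : Fin 10, ∑ l ∈ univ.erase k, (sE Y2 w k l + sE Y5 w k l)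
          = U/5 + 4*(V/2) := by
        intro k
        rw [Finset.sum_add_distrib, hrow2 k, hrow5 k, ha k, hb k]
      rw [Finset.sum_congr rfl (fun k _ => hin k), Finset.sum_const, Finset.card_univ]
      simp [Fintype.card_fin]; try ring
    rw [hL] at hR
    exact hR
  -- weight bounds on Y2
  have hwle : ∀ y ∈ Y2, w y ≤ Tc := by
    intro y hy
    have hwt := hY2mem y hy
    have h2 : 1 < #(univ.filter fun i => y i = true) := by
      rw [← wt_eq, hwt]; norm_num
    obtain ⟨k, l, hk, hl, hkl⟩ := Finset.one_lt_card_iff.mp h2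
    simp only [Finset.mem_filter] at hk hl
    have hyk := hk.2; have hyl := hl.2
    have he2 : sE Y2 w k l = w y := by
      unfold sE
      have hsingle : ∑ y' ∈ Y2, w y' * ι (y' k) * ι (y' l)
          = w y * ι (y k) * ι (y l) := by
        apply Finset.sum_eq_single_of_mem y hy
        intro y' hy' hne
        have halt : ι (y' k) * ι (y' l) = 0 ∨ (y' k = true ∧ y' l = true) := by
          unfold ι; cases h1 : y' k <;> cases h2 : y' l <;> simp
        rcases halt with h | ⟨h1, h2⟩
        · rw [mul_assoc, h, mul_zero]
        · exact absurd (wt2_eq y' y (hY2mem y' hy') hwt k l hkl h1 h2 hyk hyl) hne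
      rw [hsingle, hyk, hyl]
      unfold ι; norm_num
    have he5 : 0 ≤ sE Y5 w k l := by
      apply Finset.sum_nonneg
      intro y' hy'
      exact mul_nonneg (mul_nonneg (hwnn5 y' hy') (ι_nonneg _)) (ι_nonneg _)
    have := hT k l hkl
    linarith
  have h4U5V : 4*U ≤ 5*V := by
    have : U ≤ 5 * Tc := by
      rw [hUdef]
      calc ∑ y ∈ Y2, w y ≤ ∑ y ∈ Y2, Tc := Finset.sum_le_sum hwle
        _ = 5 * Tc := by rw [Finset.sum_const, hc2]; simp
    linarith
  -- bounds on sE Y2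
  have he2nn : ∀ k l : Fin 10, 0 ≤ sE Y2 w k l := by
    intro k l
    apply Finset.sum_nonneg
    intro y hy
    exact mul_nonneg (mul_nonneg (hwnn2 y hy) (ι_nonneg _)) (ι_nonneg _)
  have he2le : ∀ k l : Fin 10, sE Y2 w k l ≤ U/5 := by
    intro k l
    have h1 : sE Y2 w k l ≤ sA Y2 w k := by
      apply Finset.sum_le_sum
      intro y hy
      have h0 : 0 ≤ w y * ι (y k) := mul_nonneg (hwnn2 y hy) (ι_nonneg _)
      exact mul_le_of_le_one_right h0 (ι_le_one _)
    rw [ha k] at h1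
    exact h1
  -- S5 and Cauchy
  set S5 := ∑ y ∈ Y5, (w y)^2 with hS5def
  have hexpand : ∑ y ∈ Y5, (w y - V/6)^2 = S5 - V^2/6 := by
    have hterm : ∀ y : X 10, (w y - V/6)^2 = (w y)^2 - (V/3)*(w y) + (V/6)^2 := by
      intro y; ring
    simp_rw [hterm]
    rw [Finset.sum_add_distrib, Finset.sum_sub_distrib, ← Finset.mul_sum,
      Finset.sum_const, hc5, ← hVdef, ← hS5def, nsmul_eq_mul]
    push_cast; ring
  have hS5 : V^2 ≤ 6 * S5 := by
    have hnn : 0 ≤ ∑ y ∈ Y5, (w y - V/6)^2 :=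
      Finset.sum_nonneg (fun y _ => sq_nonneg _)
    rw [hexpand] at hnn
    linarith
  -- F and P
  set F := ∑ k : Fin 10, ∑ l ∈ univ.erase k, (sE Y5 w k l)^2 with hFdef
  have hbsq : ∀ k : Fin 10, (sE Y5 w k k)^2 = (V/2)^2 := by
    intro k; rw [G3, hb k]
  have hF1 : ∑ y ∈ Y5, ∑ y' ∈ Y5, w y * w y' * (Mc y y' : ℝ)^2 = F + 10*(V/2)^2 := by
    rw [← G5]
    have : ∀ k : Fin 10, ∑ l : Fin 10, (sE Y5 w k l)^2
        = (∑ l ∈ univ.erase k, (sE Y5 w k l)^2) + (V/2)^2 := by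
      intro k
      rw [Finset.sum_erase_eq_sub (mem_univ k), hbsq k]
      ring
    rw [Finset.sum_congr rfl (fun k _ => this k), Finset.sum_add_distrib,
      Finset.sum_const, Finset.card_univ, ← hFdef]
    simp [Fintype.card_fin]
    try ring
  have hMsum : ∑ y ∈ Y5, ∑ y' ∈ Y5, w y * w y' * (Mc y y' : ℝ) = 10*(V/2)^2 := by
    rw [← G4]
    rw [Finset.sum_congr rfl (fun k _ => by rw [hb k] : ∀ k ∈ univ, (sA Y5 w k)^2 = (V/2)^2)]
    rw [Finset.sum_const, Finset.card_univ]
    simp [Fintype.card_fin]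
    try ring
  have hWsum : ∑ y ∈ Y5, ∑ y' ∈ Y5, w y * w y' = V^2 := by
    rw [← Finset.sum_mul_sum, ← hVdef]
    ring
  set P := ∑ y ∈ Y5, ∑ y' ∈ Y5,
      w y * w y' * (((Mc y y' : ℝ) - 2) * ((Mc y y' : ℝ) - 3)) with hPdef
  have hPval : P = F + 10*(V/2)^2 - 5*(10*(V/2)^2) + 6*V^2 := by
    have hrowP : ∀ y ∈ Y5, ∑ y' ∈ Y5,
        w y * w y' * (((Mc y y' : ℝ) - 2) * ((Mc y y' : ℝ) - 3))
        = (∑ y' ∈ Y5, w y * w y' * (Mc y y' : ℝ)^2)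
          - 5*(∑ y' ∈ Y5, w y * w y' * (Mc y y' : ℝ))
          + 6*(∑ y' ∈ Y5, w y * w y') := by
      intro y _
      rw [Finset.mul_sum, Finset.mul_sum, ← Finset.sum_sub_distrib, ← Finset.sum_add_distrib]
      apply Finset.sum_congr rfl
      intro y' _
      ring
    rw [hPdef, Finset.sum_congr rfl hrowP, Finset.sum_add_distrib, Finset.sum_sub_distrib]
    have hm5 : ∑ y ∈ Y5, 5*(∑ y' ∈ Y5, w y * w y' * (Mc y y' : ℝ))
        = 5 * ∑ y ∈ Y5, ∑ y' ∈ Y5, w y * w y' * (Mc y y' : ℝ) := by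
      rw [Finset.mul_sum]
    have hm6 : ∑ y ∈ Y5, 6*(∑ y' ∈ Y5, w y * w y')
        = 6 * ∑ y ∈ Y5, ∑ y' ∈ Y5, w y * w y' := by
      rw [Finset.mul_sum]
    rw [hm5, hm6, hF1, hMsum, hWsum]
  have hPge : 6 * S5 ≤ P := by
    have hdiag : ∀ y ∈ Y5, 6*(w y)^2
        ≤ ∑ y' ∈ Y5, w y * w y' * (((Mc y y' : ℝ) - 2) * ((Mc y y' : ℝ) - 3)) := by
      intro y hy
      rw [← Finset.add_sum_erase _ _ hy]
      have hMyy : Mc y y = 5 := by rw [Mc_self, hY5mem y hy]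
      have hd : w y * w y * (((Mc y y : ℝ) - 2) * ((Mc y y : ℝ) - 3)) = 6*(w y)^2 := by
        rw [hMyy]; push_cast; ring
      rw [hd]
      apply le_add_of_nonneg_right
      apply Finset.sum_nonneg
      intro y' hy'
      exact mul_nonneg
        (mul_nonneg (hwnn5 y hy) (hwnn5 y' (Finset.mem_of_mem_erase hy')))
        (q_nonneg _)
    calc 6*S5 = ∑ y ∈ Y5, 6*(w y)^2 := by rw [hS5def, Finset.mul_sum]
      _ ≤ P := Finset.sum_le_sum hdiag
  -- F via Tc and e2
  set E2s := ∑ k : Fin 10, ∑ l ∈ univ.erase k, (sE Y2 w k l)^2 with hE2sdef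
  have hE2sum : ∑ k : Fin 10, ∑ l ∈ univ.erase k, sE Y2 w k l = 2*U := by
    rw [Finset.sum_congr rfl (fun k _ => by rw [hrow2 k, ha k] :
      ∀ k ∈ univ, ∑ l ∈ univ.erase k, sE Y2 w k l = U/5)]
    rw [Finset.sum_const, Finset.card_univ]
    simp [Fintype.card_fin]
    ring
  have hF2 : F = 90*Tc^2 - 4*Tc*U + E2s := by
    have hin : ∀ k : Fin 10, ∑ l ∈ univ.erase k, (sE Y5 w k l)^2
        = 9*Tc^2 - 2*Tc*(∑ l ∈ univ.erase k, sE Y2 w k l)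
          + ∑ l ∈ univ.erase k, (sE Y2 w k l)^2 := by
      intro k
      have hterm : ∀ l ∈ univ.erase k, (sE Y5 w k l)^2
          = Tc^2 - 2*Tc*(sE Y2 w k l) + (sE Y2 w k l)^2 := by
        intro l hl
        have h5 : sE Y5 w k l = Tc - sE Y2 w k l := by
          have := hT k l (fun h => (Finset.mem_erase.mp hl).1 h.symm)
          linarith
        rw [h5]; ring
      rw [Finset.sum_congr rfl hterm]
      simp only [Finset.sum_add_distrib, Finset.sum_sub_distrib, ← Finset.mul_sum,
        Finset.sum_const, Finset.card_erase_of_mem (mem_univ k), Finset.card_univ]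
      simp [Fintype.card_fin]
      try ring
    rw [hFdef, Finset.sum_congr rfl (fun k _ => hin k)]
    simp only [Finset.sum_add_distrib, Finset.sum_sub_distrib, ← Finset.mul_sum,
      Finset.sum_const, Finset.card_univ]
    rw [hE2sum, ← hE2sdef]
    simp [Fintype.card_fin]
    ring
  have hE2s_le : E2s ≤ (2*U)*(U/5) := by
    have hterm : ∀ k : Fin 10, ∀ l ∈ univ.erase k,
        (sE Y2 w k l)^2 ≤ (U/5) * sE Y2 w k l := by
      intro k l _
      nlinarith [he2nn k l, he2le k l]
    calc E2s ≤ ∑ k : Fin 10, ∑ l ∈ univ.erase k, (U/5) * sE Y2 w k l := by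
          rw [hE2sdef]
          exact Finset.sum_le_sum (fun k _ => Finset.sum_le_sum (hterm k))
      _ = (U/5) * (∑ k : Fin 10, ∑ l ∈ univ.erase k, sE Y2 w k l) := by
          rw [Finset.mul_sum]
          exact Finset.sum_congr rfl (fun k _ => by rw [Finset.mul_sum])
      _ = (2*U)*(U/5) := by rw [hE2sum]; ring
  -- the inequality chain and forced equalities
  have h1625 : 16*U^2 ≤ 25*V^2 := by nlinarith [h4U5V, hU, hV]
  have hTcv : Tc = (U + 10*V)/45 := by linarith
  have hQform : 90*Tc^2 - 4*Tc*U = (200*V^2 - 2*U^2)/45 := by rw [hTcv]; ring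
  have hQ : P + 4*V^2 = (200*V^2 - 2*U^2)/45 + E2s := by
    have : P = F - 4*V^2 := by rw [hPval]; ring
    rw [this, hF2, hQform]; ring
  have hS5eq : 6*S5 = V^2 := by linarith
  have hE2seq : E2s = 2*U^2/5 := by linarith
  have h1625eq : 16*U^2 = 25*V^2 := by linarith
  have h45 : 4*U = 5*V := by nlinarith [hU, hV]
  have hTcV4 : Tc = V/4 := by rw [hTcv]; linarith
  -- all Y5 weights equal
  have hweq : ∀ y ∈ Y5, w y = V/6 := by
    have hzero : ∑ y ∈ Y5, (w y - V/6)^2 = 0 := by rw [hexpand]; linarith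
    intro y hy
    have h0 := (Finset.sum_eq_zero_iff_of_nonneg (fun y _ => sq_nonneg (w y - V/6))).mp
      hzero y hy
    have h1 := sq_eq_zero_iff.mp h0
    linarith [sub_eq_zero.mp h1]
  -- e2 dichotomy and a zero pair
  have hzero2 : ∑ k : Fin 10, ∑ l ∈ univ.erase k, (sE Y2 w k l * (U/5 - sE Y2 w k l)) = 0 := by
    have hterm : ∀ k : Fin 10, ∀ l ∈ univ.erase k,
        sE Y2 w k l * (U/5 - sE Y2 w k l)
          = (U/5) * sE Y2 w k l - (sE Y2 w k l)^2 := by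
      intro k l _; ring
    rw [Finset.sum_congr rfl (fun k _ => Finset.sum_congr rfl (hterm k))]
    simp only [Finset.sum_sub_distrib, ← Finset.mul_sum]
    rw [hE2sum, ← hE2sdef]
    linarith
  have hdichnn : ∀ k : Fin 10, ∀ l ∈ univ.erase k, 0 ≤ sE Y2 w k l * (U/5 - sE Y2 w k l) := by
    intro k l _
    have := he2nn k l; have := he2le k l
    nlinarith
  have hdich : ∀ k : Fin 10, ∀ l ∈ univ.erase k,
      sE Y2 w k l = 0 ∨ sE Y2 w k l = U/5 := by
    intro k l hl
    have houter := (Finset.sum_eq_zero_iff_of_nonneg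
      (fun k _ => Finset.sum_nonneg (hdichnn k))).mp hzero2 k (mem_univ k)
    have hinner := (Finset.sum_eq_zero_iff_of_nonneg (hdichnn k)).mp houter l hl
    rcases mul_eq_zero.mp hinner with h | h
    · exact Or.inl h
    · exact Or.inr (by linarith)
  have hex : ∃ k : Fin 10, ∃ l ∈ univ.erase k, sE Y2 w k l = 0 := by
    by_contra hcon
    push_neg at hcon
    have hall : ∀ k : Fin 10, ∀ l ∈ univ.erase k, sE Y2 w k l = U/5 := by
      intro k l hl
      exact (hdich k l hl).resolve_left (hcon k l hl)
    have : ∑ k : Fin 10, ∑ l ∈ univ.erase k, sE Y2 w k l = 18*U := by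
      rw [Finset.sum_congr rfl (fun k _ => by
        rw [Finset.sum_congr rfl (hall k), Finset.sum_const,
          Finset.card_erase_of_mem (mem_univ k), Finset.card_univ]
        simp [Fintype.card_fin] :
        ∀ k ∈ univ, ∑ l ∈ univ.erase k, sE Y2 w k l = 9 * (U/5))]
      rw [Finset.sum_const, Finset.card_univ]
      simp [Fintype.card_fin]
      ring
    rw [hE2sum] at this
    linarith
  obtain ⟨k, l, hl, he0⟩ := hex
  have hkl : k ≠ l := fun h => (Finset.mem_erase.mp hl).1 h.symm
  have hf : sE Y5 w k l = V/4 := by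
    have := hT k l hkl
    linarith [hTcV4]
  have hNval : sE Y5 w k l
      = (V/6) * (#(Y5.filter fun y => y k = true ∧ y l = true) : ℝ) := by
    unfold sE
    rw [Finset.sum_congr rfl (fun y hy => by rw [hweq y hy] :
      ∀ y ∈ Y5, w y * ι (y k) * ι (y l) = (V/6) * ι (y k) * ι (y l))]
    rw [Finset.sum_congr rfl (fun y _ => by ring :
      ∀ y ∈ Y5, (V/6) * ι (y k) * ι (y l) = (V/6) * (ι (y k) * ι (y l)))]
    rw [← Finset.mul_sum, sum_ι2Z]
  rw [hNval] at hf
  have hV0 : V ≠ 0 := ne_of_gt hV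
  have hm : (2 * ((#(Y5.filter fun y => y k = true ∧ y l = true)) : ℝ)) * V = 3 * V := by
    linarith [hf]
  have h3 : 2 * ((#(Y5.filter fun y => y k = true ∧ y l = true)) : ℝ) = 3 :=
    mul_right_cancel₀ hV0 hm
  have h3n : ((2 * #(Y5.filter fun y => y k = true ∧ y l = true) : ℕ) : ℝ) = ((3 : ℕ) : ℝ) := by
    push_cast
    linarith [h3]
  have h3n' := Nat.cast_inj (R := ℝ) |>.mp h3n
  have hodd : (2 * #(Y5.filter fun y => y k = true ∧ y l = true)) % 2 = 0 :=
    Nat.mul_mod_right 2 _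
  rw [h3n'] at hodd
  norm_num at hodd

set_option maxHeartbeats 1600000 in
/-- Non-existence of a (necessarily tight) relative 2-design in H(10,2) on the
shells X_2 and X_5 with |Y ∩ X_2| = 5 and |Y ∩ X_5| = 6
(parameter set H10_r2_r5 of the paper's table). -/
theorem no_tight_relative2design_H10_r2_r5 :
    ¬ ∃ (Y : Finset (X 10)) (w : X 10 → ℝ),
      IsRelativeDesign 10 2 Y w {2, 5} ∧
      (Y.filter (fun y => hammingDist (u₀ 10) y = 2)).card = 5 ∧
      (Y.filter (fun y => hammingDist (u₀ 10) y = 5)).card = 6 := by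
  rintro ⟨Y, w, hD, hc2, hc5⟩
  obtain ⟨hsupp, -, hpos, hdesign⟩ := hD
  classical
  set Y2 := Y.filter (fun y => hammingDist (u₀ 10) y = 2) with hY2
  set Y5 := Y.filter (fun y => hammingDist (u₀ 10) y = 5) with hY5
  have hY2mem : ∀ y ∈ Y2, hammingDist (u₀ 10) y = 2 :=
    fun y hy => (Finset.mem_filter.mp hy).2
  have hY5mem : ∀ y ∈ Y5, hammingDist (u₀ 10) y = 5 :=
    fun y hy => (Finset.mem_filter.mp hy).2
  have hpos2 : ∀ y ∈ Y2, 0 < w y := fun y hy => hpos y (Finset.filter_subset _ _ hy)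
  have hpos5 : ∀ y ∈ Y5, 0 < w y := fun y hy => hpos y (Finset.filter_subset _ _ hy)
  have hnot : Y.filter (fun y => ¬ (hammingDist (u₀ 10) y = 2)) = Y5 := by
    rw [hY5]
    apply Finset.filter_congr
    intro y hy
    have := hsupp y hy
    simp only [Finset.mem_insert, Finset.mem_singleton] at this
    constructor
    · intro h2; omega
    · intro h5; omega
  have hsplit : ∀ g : X 10 → ℝ, ∑ y ∈ Y, g y = ∑ y ∈ Y2, g y + ∑ y ∈ Y5, g y := by
    intro g
    rw [← Finset.sum_filter_add_sum_filter_not Y (fun y => hammingDist (u₀ 10) y = 2),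
      hnot, ← hY2]
  have hsym : ∀ j, j ≤ 2 → ∀ (u : X 10) (σ : Equiv.Perm (Fin 10)),
      ∑ y ∈ Y, w y * Q 10 j (hammingDist (u ∘ σ) y)
        = ∑ y ∈ Y, w y * Q 10 j (hammingDist u y) := by
    intro j hj u σ
    rw [← hdesign j hj u, ← hdesign j hj (u ∘ ⇑σ)]
    apply Finset.sum_congr rfl
    intro r _
    rw [shell_perm_sum]
  have RHS1 : ∀ k : Fin 10, ∑ y ∈ Y, w y * Q 10 1 (hammingDist (u1 k) y)
      = 4*(∑ y ∈ Y2, w y) - 2*(∑ y ∈ Y5, w y) + 4*(sA Y2 w k + sA Y5 w k) := by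
    intro k
    rw [hsplit]
    have h2 : ∑ y ∈ Y2, w y * Q 10 1 (hammingDist (u1 k) y)
        = 4*(∑ y ∈ Y2, w y) + 4*(sA Y2 w k) := by
      rw [Finset.sum_congr rfl (fun y hy => by rw [Qy1_2 k y (hY2mem y hy)] :
        ∀ y ∈ Y2, w y * Q 10 1 (hammingDist (u1 k) y) = w y * (4 + 4 * ι (y k)))]
      unfold sA
      rw [Finset.mul_sum, Finset.mul_sum, ← Finset.sum_add_distrib]
      apply Finset.sum_congr rfl
      intro y _
      ring
    have h5 : ∑ y ∈ Y5, w y * Q 10 1 (hammingDist (u1 k) y)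
        = (-2)*(∑ y ∈ Y5, w y) + 4*(sA Y5 w k) := by
      rw [Finset.sum_congr rfl (fun y hy => by rw [Qy1_5 k y (hY5mem y hy)] :
        ∀ y ∈ Y5, w y * Q 10 1 (hammingDist (u1 k) y) = w y * (-2 + 4 * ι (y k)))]
      unfold sA
      rw [Finset.mul_sum, Finset.mul_sum, ← Finset.sum_add_distrib]
      apply Finset.sum_congr rfl
      intro y _
      ring
    rw [h2, h5]
    ring
  have RHS2 : ∀ k l : Fin 10, k ≠ l → ∑ y ∈ Y, w y * Q 10 2 (hammingDist (u2 k l) y)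
      = (-3)*(∑ y ∈ Y2, w y) + 3*(∑ y ∈ Y5, w y)
        + (16*(sA Y2 w k + sA Y2 w l) - 8*(sA Y5 w k + sA Y5 w l)
          + 16*(sE Y2 w k l + sE Y5 w k l)) := by
    intro k l hkl
    rw [hsplit]
    have h2 : ∑ y ∈ Y2, w y * Q 10 2 (hammingDist (u2 k l) y)
        = (-3)*(∑ y ∈ Y2, w y) + 16*(sA Y2 w k) + 16*(sA Y2 w l) + 16*(sE Y2 w k l) := by
      rw [Finset.sum_congr rfl (fun y hy => by rw [Qy2_2 k l hkl y (hY2mem y hy)] :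
        ∀ y ∈ Y2, w y * Q 10 2 (hammingDist (u2 k l) y)
          = w y * (-3 + 16 * (ι (y k) + ι (y l)) + 16 * (ι (y k) * ι (y l))))]
      unfold sA sE
      rw [Finset.mul_sum, Finset.mul_sum, Finset.mul_sum, Finset.mul_sum,
        ← Finset.sum_add_distrib, ← Finset.sum_add_distrib, ← Finset.sum_add_distrib]
      apply Finset.sum_congr rfl
      intro y _
      ring
    have h5 : ∑ y ∈ Y5, w y * Q 10 2 (hammingDist (u2 k l) y)
        = 3*(∑ y ∈ Y5, w y) - 8*(sA Y5 w k) - 8*(sA Y5 w l) + 16*(sE Y5 w k l) := by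
      rw [Finset.sum_congr rfl (fun y hy => by rw [Qy2_5 k l hkl y (hY5mem y hy)] :
        ∀ y ∈ Y5, w y * Q 10 2 (hammingDist (u2 k l) y)
          = w y * (3 - 8 * (ι (y k) + ι (y l)) + 16 * (ι (y k) * ι (y l))))]
      unfold sA sE
      rw [Finset.mul_sum, Finset.mul_sum, Finset.mul_sum, Finset.mul_sum,
        ← Finset.sum_sub_distrib, ← Finset.sum_sub_distrib, ← Finset.sum_add_distrib]
      apply Finset.sum_congr rfl
      intro y _
      ring
    rw [h2, h5]
    ring
  have E1 : ∀ k : Fin 10, sA Y2 w k + sA Y5 w k = sA Y2 w 0 + sA Y5 w 0 := by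
    intro k
    have hcomp : (u1 0) ∘ ⇑(Equiv.swap (0 : Fin 10) k) = u1 k := by
      rw [u1_comp, Equiv.swap_inv, Equiv.swap_apply_left]
    have h := hsym 1 (by norm_num) (u1 0) (Equiv.swap 0 k)
    rw [hcomp, RHS1 k, RHS1 0] at h
    linarith
  have E2 : ∀ k l : Fin 10, k ≠ l →
      16*(sA Y2 w k + sA Y2 w l) - 8*(sA Y5 w k + sA Y5 w l)
        + 16*(sE Y2 w k l + sE Y5 w k l)
      = 16*(sA Y2 w 0 + sA Y2 w 1) - 8*(sA Y5 w 0 + sA Y5 w 1)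
        + 16*(sE Y2 w 0 1 + sE Y5 w 0 1) := by
    intro k l hkl
    obtain ⟨σ, h0, h1⟩ := exists_perm_pair k l hkl
    have hcomp : (u2 0 1) ∘ ⇑σ = u2 k l := by rw [u2_comp, h0, h1]
    have h := hsym 2 (le_refl 2) (u2 0 1) σ
    rw [hcomp, RHS2 k l hkl, RHS2 0 1 (by decide)] at h
    linarith
  exact core Y2 Y5 w hY2mem hY5mem hc2 hc5 hpos2 hpos5 E1 E2
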